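/- arXiv:2311.15442 — 3 statements merged into one kernel-verified Lean document; each statement's English description precedes it below -/
import Mathlib

section
/- For any d, t ∈ ℕ with t ≤ d, the number of lattice points x ∈ ℤ^d with Σ_{i=1}^d |x_i| ≤ t equals Σ_{l=0}^t 2^l · C(d,l) · C(t,l), where C(n,k) denotes the binomial coefficient. -/
/-!
The count is the Delannoy number `D(d, t)`. Slicing the ball of radius `t` in `ℤ^{d+1}` by its
first coordinate `k ∈ [-t, t]` leaves a ball of radius `t - |k|` in `ℤ^d`, so
`N(d+1, t) = N(d, t) + 2 ∑_{j<t} N(d, j)`. The closed form satisfies the same recursion: Pascal's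
rule in `d` splits off `2 ∑_l 2^l C(d,l) C(t,l+1)`, and the hockey-stick identity
`∑_{j<t} C(j,l) = C(t,l+1)` identifies this sum with `∑_{j<t} D(d, j)`.
-/

open Finset

noncomputable section

/-- The lattice points of the closed `l¹` ball of radius `t` in `ℤ^d`,
i.e. `B_t ∩ ℤ^d` where `B_t = {x ∈ ℝ^d : Σ |x_i| ≤ t}`. -/
def latticeBall (d t : ℕ) : Finset (Fin d → ℤ) :=
  (Finset.Icc (fun _ => -(t : ℤ)) (fun _ => (t : ℤ))).filter fun y => ∑ i, |y i| ≤ (t : ℤ)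

lemma sum_Icc_neg_self_natAbs {M : Type*} [AddCommMonoid M] (n : ℕ) (f : ℕ → M) :
    ∑ k ∈ Icc (-(n : ℤ)) n, f (n - k.natAbs) = f n + 2 • ∑ j ∈ range n, f j := by
  induction n generalizing f with
  | zero => simp
  | succ n ih =>
    have hIcc : Icc (-((n + 1 : ℕ) : ℤ)) (n + 1 : ℕ)
        = insert ((n : ℤ) + 1) (insert (-(n : ℤ) - 1) (Icc (-(n : ℤ)) n)) := by
      ext k; simp only [mem_Icc, mem_insert]; omega
    have hshift : ∀ k ∈ Icc (-(n : ℤ)) n, f (n + 1 - k.natAbs) = f (n - k.natAbs + 1) := by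
      intro k hk
      rw [mem_Icc] at hk
      congr 1
      omega
    rw [hIcc, sum_insert (by simp; omega), sum_insert (by simp), sum_congr rfl hshift,
      ih fun j => f (j + 1), sum_range_succ']
    have hend : ((n : ℤ) + 1).natAbs = n + 1 ∧ (-(n : ℤ) - 1).natAbs = n + 1 := by omega
    rw [hend.1, hend.2, Nat.sub_self, smul_add, two_nsmul (f 0)]
    abel

lemma sum_range_choose_eq_choose_succ (t l : ℕ) :
    ∑ j ∈ range t, j.choose l = t.choose (l + 1) := by
  induction t with
  | zero => simp
  | succ t ih => rw [sum_range_succ, ih, Nat.choose_succ_succ', add_comm]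

lemma mem_latticeBall {d t : ℕ} {y : Fin d → ℤ} :
    y ∈ latticeBall d t ↔ ∑ i, |y i| ≤ (t : ℤ) := by
  have hcoord (h : ∑ i, |y i| ≤ t) (i : Fin d) : -(t : ℤ) ≤ y i ∧ y i ≤ t :=
    abs_le.1 ((single_le_sum (fun i _ => abs_nonneg (y i)) (mem_univ i)).trans h)
  exact mem_filter.trans <| and_iff_right_of_imp fun h =>
    mem_Icc.2 ⟨fun i => (hcoord h i).1, fun i => (hcoord h i).2⟩

lemma card_latticeBall_zero_dim (t : ℕ) : #(latticeBall 0 t) = 1 :=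
  card_eq_one.2 ⟨0, eq_singleton_iff_unique_mem.2
    ⟨mem_latticeBall.2 (by simp), fun y _ => Subsingleton.elim y 0⟩⟩

lemma card_latticeBall_succ_dim_eq_sum_Icc (d t : ℕ) :
    #(latticeBall (d + 1) t) = ∑ k ∈ Icc (-(t : ℤ)) t, #(latticeBall d (t - k.natAbs)) := by
  have hfirst : ∀ y ∈ latticeBall (d + 1) t, y 0 ∈ Icc (-(t : ℤ)) t := fun y hy =>
    have h := mem_Icc.1 (mem_filter.1 hy).1
    mem_Icc.2 ⟨h.1 0, h.2 0⟩
  rw [card_eq_sum_card_fiberwise fun y hy => hfirst y hy]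
  refine sum_congr rfl fun k hk => ?_
  have hrad : ((t - k.natAbs : ℕ) : ℤ) = t - |k| := by
    have := abs_le.2 (mem_Icc.1 hk)
    rw [Int.abs_eq_natAbs] at this ⊢
    omega
  refine card_nbij' Fin.tail (fun z => Fin.cons k z) (fun y hy => ?_) (fun z hz => ?_)
    (fun y hy => ?_) (fun z _ => Fin.tail_cons _ _)
  · obtain ⟨hball, rfl⟩ := mem_filter.1 hy
    rw [mem_latticeBall, Fin.sum_univ_succ] at hball
    rw [mem_coe, mem_latticeBall, hrad]
    exact le_sub_iff_add_le'.2 hball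
  · rw [mem_coe, mem_latticeBall, hrad] at hz
    refine mem_filter.2 ⟨?_, Fin.cons_zero _ _⟩
    rw [mem_latticeBall, Fin.sum_univ_succ]
    simpa only [Fin.cons_zero, Fin.cons_succ] using le_sub_iff_add_le'.1 hz
  · obtain ⟨-, rfl⟩ := mem_filter.1 hy
    exact Fin.cons_self_tail y

lemma card_latticeBall_succ_dim (d t : ℕ) :
    #(latticeBall (d + 1) t) = #(latticeBall d t) + 2 * ∑ j ∈ range t, #(latticeBall d j) := by
  rw [card_latticeBall_succ_dim_eq_sum_Icc,
    sum_Icc_neg_self_natAbs (f := fun j => #(latticeBall d j)), smul_eq_mul]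

def delannoy (d t : ℕ) : ℕ :=
  ∑ l ∈ range (t + 1), 2 ^ l * d.choose l * t.choose l

lemma delannoy_zero_left (t : ℕ) : delannoy 0 t = 1 := by
  simp [delannoy, sum_range_succ']

lemma sum_range_delannoy (d t : ℕ) :
    ∑ j ∈ range t, delannoy d j = ∑ l ∈ range t, 2 ^ l * d.choose l * t.choose (l + 1) := by
  have hextend :
      ∀ j ∈ range t, delannoy d j = ∑ l ∈ range t, 2 ^ l * d.choose l * j.choose l := by
    intro j hj
    refine sum_subset (range_subset_range.2 (mem_range.1 hj)) fun l _ hl => ?_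
    rw [Nat.choose_eq_zero_of_lt (n := j) (by simpa using hl), mul_zero]
  simp only [sum_congr rfl hextend, sum_comm (s := range t), ← mul_sum,
    sum_range_choose_eq_choose_succ]

lemma delannoy_succ_left (d t : ℕ) :
    delannoy (d + 1) t = delannoy d t + 2 * ∑ j ∈ range t, delannoy d j := by
  rw [sum_range_delannoy, delannoy, delannoy, sum_range_succ', sum_range_succ']
  simp only [Nat.choose_succ_succ', Nat.choose_zero_right, pow_succ, mul_add, add_mul,
    sum_add_distrib, mul_sum]
  ring_nf

lemma card_latticeBall_eq_delannoy (d t : ℕ) : #(latticeBall d t) = delannoy d t := by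
  induction d generalizing t with
  | zero => rw [card_latticeBall_zero_dim, delannoy_zero_left]
  | succ d ih => simp only [card_latticeBall_succ_dim, delannoy_succ_left, ih]

theorem card_latticeBall_general (d t : ℕ) :
    (latticeBall d t).card = ∑ l ∈ Finset.range (t + 1), 2 ^ l * d.choose l * t.choose l :=
  card_latticeBall_eq_delannoy d t

/-- `|B_t ∩ ℤ^d| = Σ_{l=0}^t 2^l · C(d,l) · C(t,l)` for `t ≤ d`. -/
theorem card_latticeBall (d t : ℕ) (ht0 : 1 ≤ t) (ht : t ≤ d) :
    (latticeBall d t).card = ∑ l ∈ Finset.range (t + 1), 2 ^ l * d.choose l * t.choose l :=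
  card_latticeBall_general d t
end
end

section
/- Let d ∈ ℕ with d ≥ 4. Then for every f ∈ l^2(ℤ^d) one has ‖ sup_{t ∈ 𝔻, t ≤ √d} |(𝓜_t − 𝓢_t) f| ‖_{l^2(ℤ^d)} ≤ 6 · ‖f‖_{l^2(ℤ^d)}. -/
/-!
For `t ≤ √d` the operator `𝓜_t - 𝓢_t` is convolution with `k_t = 1_B / |B| - 1_S / |S|`, where
`S = S_t ⊆ B = B_t ∩ ℤ^d`, and `‖k_t‖₁ ≤ 2 |B \ S| / |B|`. Every `y ∈ B \ S` can be moved inside `B`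
in at least `d` ways by putting `±1` on a vanishing coordinate (first shrinking a coordinate of size
`≥ 2` if `y` has full mass), while every point of `B` is reached from at most `t (t + 1)` points.
Double counting gives `|B \ S| d ≤ t (t + 1) |B|`, so `‖k_t‖₁ ≤ 4 t² / d`. Bounding the supremum
by the sum over the dyadic `t` and applying Young's inequality `‖k * f‖₂ ≤ ‖k‖₁ ‖f‖₂` to each term
gives the constant `∑_{4ⁿ ≤ d} 4 · 4ⁿ / d ≤ 16 / 3`.
-/

open Finset MeasureTheory
open scoped ENNReal NNReal

noncomputable section

/-- `S_t = {x ∈ {-1,0,1}^d : Σ |x_i| = t}`. -/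
def sphereS (d t : ℕ) : Finset (Fin d → ℤ) :=
  (Finset.Icc (fun _ => (-1 : ℤ)) (fun _ => (1 : ℤ))).filter fun y => ∑ i, |y i| = (t : ℤ)

/-- `𝓜_t f (x) = |B_t ∩ ℤ^d|⁻¹ Σ_{y ∈ B_t ∩ ℤ^d} f (x - y)`. -/
def Mop (d t : ℕ) (f : (Fin d → ℤ) → ℂ) (x : Fin d → ℤ) : ℂ :=
  ((latticeBall d t).card : ℂ)⁻¹ * ∑ y ∈ latticeBall d t, f (x - y)

/-- `𝓢_t f (x) = |S_t|⁻¹ Σ_{y ∈ S_t} f (x - y)`. -/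
def Sop (d t : ℕ) (f : (Fin d → ℤ) → ℂ) (x : Fin d → ℤ) : ℂ :=
  ((sphereS d t).card : ℂ)⁻¹ * ∑ y ∈ sphereS d t, f (x - y)

theorem Int.sign_sub_sign_of_one_lt_abs {a : ℤ} (ha : 1 < |a|) : (a - a.sign).sign = a.sign := by
  rcases lt_abs.1 ha with h | h
  · rw [Int.sign_eq_one_of_pos (by omega : 0 < a), Int.sign_eq_one_of_pos (by omega)]
  · rw [Int.sign_eq_neg_one_of_neg (by omega : a < 0), Int.sign_eq_neg_one_of_neg (by omega)]

theorem Int.abs_sub_sign {a : ℤ} (ha : a ≠ 0) : |a - a.sign| = |a| - 1 := by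
  rcases ha.lt_or_gt with h | h
  · rw [Int.sign_eq_neg_one_of_neg h, abs_of_neg h, abs_of_nonpos (by omega)]; ring
  · rw [Int.sign_eq_one_of_pos h, abs_of_pos h, abs_of_nonneg (by omega)]

theorem Int.sub_sign_ne_zero {a : ℤ} (ha : 1 < |a|) : a - a.sign ≠ 0 := by
  rw [← abs_pos, Int.abs_sub_sign (by rintro rfl; simp at ha)]; omega

section AverageDiffKernel

variable {α : Type*} [DecidableEq α] (B S : Finset α)

/-- The convolution kernel of the average over `B` minus the average over `S ⊆ B`; it is the
kernel only on `B`. -/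
def averageDiffKernel (y : α) : ℝ := (#B : ℝ)⁻¹ - if y ∈ S then (#S : ℝ)⁻¹ else 0

variable {B S}

theorem average_sub_average_eq (hSB : S ⊆ B) (g : α → ℂ) :
    (#B : ℂ)⁻¹ * ∑ y ∈ B, g y - (#S : ℂ)⁻¹ * ∑ y ∈ S, g y =
      ∑ y ∈ B, (averageDiffKernel B S y : ℂ) * g y := by
  simp only [averageDiffKernel, Complex.ofReal_sub, apply_ite Complex.ofReal, Complex.ofReal_inv,
    Complex.ofReal_natCast, Complex.ofReal_zero, sub_mul, ite_mul, zero_mul, sum_sub_distrib,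
    ← mul_sum, sum_ite_mem, inter_eq_right.2 hSB]

theorem sum_abs_averageDiffKernel_le (hSB : S ⊆ B) :
    ∑ y ∈ B, |averageDiffKernel B S y| ≤ 2 * #(B \ S) / #B := by
  have hout : ∀ y ∈ B \ S, |averageDiffKernel B S y| = (#B : ℝ)⁻¹ := fun y hy => by
    simp [averageDiffKernel, (mem_sdiff.1 hy).2]
  have hin : ∑ y ∈ S, |averageDiffKernel B S y| ≤ #(B \ S) / #B := by
    rcases S.eq_empty_or_nonempty with rfl | hS
    · simp only [sum_empty]; positivity
    have hS' : (0 : ℝ) < #S := by exact_mod_cast hS.card_pos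
    have hSB' : (#S : ℝ) ≤ #B := by exact_mod_cast card_le_card hSB
    have habs : ∀ y ∈ S, |averageDiffKernel B S y| = (#S : ℝ)⁻¹ - (#B : ℝ)⁻¹ := fun y hy => by
      rw [averageDiffKernel, if_pos hy, abs_sub_comm,
        abs_of_nonneg (sub_nonneg.2 (inv_anti₀ hS' hSB'))]
    rw [sum_congr rfl habs, sum_const, nsmul_eq_mul, card_sdiff_of_subset hSB,
      Nat.cast_sub (card_le_card hSB)]
    have hB' : (#B : ℝ) ≠ 0 := by linarith
    exact le_of_eq (by field_simp)
  rw [← sum_sdiff hSB, sum_congr rfl hout, sum_const, nsmul_eq_mul]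
  linarith [show 2 * (#(B \ S) : ℝ) / #B = #(B \ S) * (#B : ℝ)⁻¹ + #(B \ S) / #B by ring]

end AverageDiffKernel

theorem eLpNorm_two_count_eq_tsum {α ε : Type*} [MeasurableSpace α] [MeasurableSingletonClass α]
    [TopologicalSpace ε] [ENorm ε] (g : α → ε) :
    eLpNorm g 2 Measure.count = (∑' x, ‖g x‖ₑ ^ (2 : ℝ)) ^ ((1 : ℝ) / 2) := by
  rw [eLpNorm_eq_lintegral_rpow_enorm_toReal two_ne_zero ENNReal.ofNat_ne_top, lintegral_count]
  norm_num

section Young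

variable {G E : Type*} [AddGroup G] [Countable G] [MeasurableSpace G] [MeasurableSingletonClass G]
  [NormedAddCommGroup E]

theorem eLpNorm_count_comp_sub_right (p : ℝ≥0∞) (g : G → E) (y : G) :
    eLpNorm (fun x => g (x - y)) p Measure.count = eLpNorm g p Measure.count :=
  eLpNorm_comp_measurePreserving .of_discrete (measurePreserving_sub_right _ y)

variable [NormedSpace ℝ E] {p : ℝ≥0∞}

theorem eLpNorm_sum_smul_comp_sub_le (hp : 1 ≤ p) (s : Finset G) (w : G → ℝ) (g : G → E) :
    eLpNorm (fun x => ∑ y ∈ s, w y • g (x - y)) p Measure.count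
      ≤ (∑ y ∈ s, ‖w y‖ₑ) * eLpNorm g p Measure.count := by
  calc eLpNorm (fun x => ∑ y ∈ s, w y • g (x - y)) p Measure.count
      = eLpNorm (∑ y ∈ s, w y • fun x => g (x - y)) p Measure.count := by
        congr 1; ext x; simp
    _ ≤ ∑ y ∈ s, eLpNorm (w y • fun x => g (x - y)) p Measure.count :=
        eLpNorm_sum_le (fun _ _ => .of_discrete) hp
    _ ≤ ∑ y ∈ s, ‖w y‖ₑ * eLpNorm g p Measure.count := by
        gcongr with y
        exact (eLpNorm_const_smul_le ..).trans_eq (by rw [eLpNorm_count_comp_sub_right])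
    _ = _ := (sum_mul ..).symm

theorem eLpNorm_sum_sum_smul_comp_sub_le {ι : Type*} (hp : 1 ≤ p) (I : Finset ι)
    (s : ι → Finset G) (w : ι → G → ℝ) (g : G → E) :
    eLpNorm (fun x => ∑ n ∈ I, ∑ y ∈ s n, w n y • g (x - y)) p Measure.count
      ≤ (∑ n ∈ I, ∑ y ∈ s n, ‖w n y‖ₑ) * eLpNorm g p Measure.count := by
  calc eLpNorm (fun x => ∑ n ∈ I, ∑ y ∈ s n, w n y • g (x - y)) p Measure.count
      = eLpNorm (∑ n ∈ I, fun x => ∑ y ∈ s n, w n y • g (x - y)) p Measure.count := by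
        congr 1; ext x; simp
    _ ≤ ∑ n ∈ I, eLpNorm (fun x => ∑ y ∈ s n, w n y • g (x - y)) p Measure.count :=
        eLpNorm_sum_le (fun _ _ => .of_discrete) hp
    _ ≤ ∑ n ∈ I, (∑ y ∈ s n, ‖w n y‖ₑ) * eLpNorm g p Measure.count := by
        gcongr with n
        exact eLpNorm_sum_smul_comp_sub_le hp (s n) (w n) g
    _ = _ := (sum_mul ..).symm

end Young

namespace LatticeBall

variable {d t : ℕ}

theorem mem_latticeBall {y : Fin d → ℤ} : y ∈ latticeBall d t ↔ ∑ i, |y i| ≤ t := by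
  refine mem_filter.trans ⟨And.right, fun h => ⟨mem_Icc.2 ⟨fun i => ?_, fun i => ?_⟩, h⟩⟩ <;>
  · have := (single_le_sum (fun j _ => abs_nonneg (y j)) (mem_univ i)).trans h
    grind [abs_le]

theorem mem_sphereS {y : Fin d → ℤ} : y ∈ sphereS d t ↔ (∀ i, |y i| ≤ 1) ∧ ∑ i, |y i| = t := by
  simp only [sphereS, mem_filter, mem_Icc, Pi.le_def, abs_le, forall_and]

theorem sphereS_subset_latticeBall : sphereS d t ⊆ latticeBall d t :=
  fun _ hy => mem_latticeBall.2 (mem_sphereS.1 hy).2.le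

theorem sum_abs_update (y : Fin d → ℤ) (i : Fin d) (v : ℤ) :
    ∑ j, |Function.update y i v j| = ∑ j, |y j| - |y i| + |v| := by
  have h := Function.comp_update y i v (f := abs)
  simp only [Function.comp_def] at h
  rw [h, sum_update_of_mem (mem_univ i), ← add_sum_erase _ _ (mem_univ i),
    sdiff_singleton_eq_erase]
  ring

def coordSupport (y : Fin d → ℤ) : Finset (Fin d) := {i | y i ≠ 0}

theorem card_coordSupport_le (y : Fin d → ℤ) : (#(coordSupport y) : ℤ) ≤ ∑ i, |y i| :=
  calc (#(coordSupport y) : ℤ) = ∑ i ∈ coordSupport y, 1 := by simp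
    _ ≤ ∑ i ∈ coordSupport y, |y i| :=
      sum_le_sum fun i hi => Int.one_le_abs (mem_filter.1 hi).2
    _ ≤ ∑ i, |y i| := sum_le_sum_of_subset_of_nonneg (subset_univ _) fun i _ _ => abs_nonneg _

/-- The points from which `z` is reached by one move. A move puts `±1` on a vanishing coordinate `j`,
after first shifting a coordinate `i` with `|y i| ≥ 2` one step towards `0` when `y` has full mass;
it is undone by clearing `j` and, in the second case, pushing `i` back away from `0`. -/
def predecessors (z : Fin d → ℤ) : Finset (Fin d → ℤ) :=
  (coordSupport z ×ˢ (coordSupport z).insertNone).image fun ji =>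
    Function.update z ji.1 0 + ji.2.elim 0 fun i => Pi.single i (z i).sign

theorem card_predecessors_le (z : Fin d → ℤ) :
    #(predecessors z) ≤ #(coordSupport z) * (#(coordSupport z) + 1) :=
  card_image_le.trans_eq (by rw [card_product, card_insertNone])

theorem card_predecessors_le_of_mem_latticeBall {z : Fin d → ℤ} (hz : z ∈ latticeBall d t) :
    #(predecessors z) ≤ t * (t + 1) := by
  have : #(coordSupport z) ≤ t := by
    have := (card_coordSupport_le z).trans (mem_latticeBall.1 hz); omega
  exact (card_predecessors_le z).trans (Nat.mul_le_mul this (by omega))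

theorem mem_predecessors_update {y : Fin d → ℤ} {j : Fin d} {ε : ℤ} (hyj : y j = 0)
    (hε : ε ≠ 0) : y ∈ predecessors (Function.update y j ε) := by
  refine mem_image.2 ⟨(j, none), mem_product.2 ⟨by simp [coordSupport, hε], by simp⟩, ?_⟩
  simp [← hyj]

theorem mem_predecessors_update_update {y : Fin d → ℤ} {i j : Fin d} {ε : ℤ} (hyi : 1 < |y i|)
    (hyj : y j = 0) (hε : ε ≠ 0) :
    y ∈ predecessors (Function.update (Function.update y i (y i - (y i).sign)) j ε) := by
  have hij : i ≠ j := by rintro rfl; simp [hyj] at hyi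
  refine mem_image.2 ⟨(j, some i), mem_product.2 ⟨by simp [coordSupport, hε], ?_⟩, ?_⟩
  · simpa [coordSupport, hij] using Int.sub_sign_ne_zero hyi
  · ext k
    rcases eq_or_ne k i with rfl | hki
    · simp [hij, Int.sign_sub_sign_of_one_lt_abs hyi]
    · rcases eq_or_ne k j with rfl | hkj
      · simp [hki, hyj]
      · simp [hki, hkj]

theorem exists_shrink_mem_predecessors {y : Fin d → ℤ} (hy : y ∈ latticeBall d t \ sphereS d t) :
    ∃ y' : Fin d → ℤ, coordSupport y' = coordSupport y ∧ ∑ i, |y' i| < t ∧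
      ∀ j, y j = 0 → ∀ ε ≠ 0, y ∈ predecessors (Function.update y' j ε) := by
  obtain ⟨hyB, hyS⟩ := mem_sdiff.1 hy
  rw [mem_latticeBall] at hyB
  by_cases hlt : ∑ i, |y i| < t
  · exact ⟨y, rfl, hlt, fun j hj ε hε => mem_predecessors_update hj hε⟩
  obtain ⟨i, hi⟩ : ∃ i, 1 < |y i| := by
    by_contra! h
    exact hyS (mem_sphereS.2 ⟨h, by omega⟩)
  have hi₀ : y i ≠ 0 := abs_pos.1 (by omega)
  refine ⟨Function.update y i (y i - (y i).sign), ?_, ?_,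
    fun j hj ε hε => mem_predecessors_update_update hi hj hε⟩
  · ext k
    rcases eq_or_ne k i with rfl | hki
    · simp [coordSupport, Int.sub_sign_ne_zero hi, hi₀]
    · simp [coordSupport, hki]
  · rw [sum_abs_update, Int.abs_sub_sign hi₀]
    omega

theorem le_card_filter_mem_predecessors (hdt : 2 * t ≤ d + 2) {y : Fin d → ℤ}
    (hy : y ∈ latticeBall d t \ sphereS d t) :
    d ≤ #{z ∈ latticeBall d t | y ∈ predecessors z} := by
  obtain ⟨y', hsupp, hmass, hpred⟩ := exists_shrink_mem_predecessors hy
  set Z : Finset (Fin d) := {j | y j = 0}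
  have hZ : d ≤ 2 * #Z := by
    have hsplit : #Z + #(coordSupport y) = d := by
      rw [coordSupport, card_filter_add_card_filter_not, card_univ, Fintype.card_fin]
    have := hsupp ▸ card_coordSupport_le y'
    omega
  have hy'Z : ∀ j ∈ Z, y' j = 0 := fun j hj => by
    by_contra h
    have : j ∈ coordSupport y := hsupp ▸ mem_filter.2 ⟨mem_univ j, h⟩
    exact (mem_filter.1 this).2 (mem_filter.1 hj).2
  calc d ≤ #(Z ×ˢ ({1, -1} : Finset ℤ)) := by simpa [card_product, mul_comm] using hZ
    _ ≤ #{z ∈ latticeBall d t | y ∈ predecessors z} := by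
      refine card_le_card_of_injOn (fun jε => Function.update y' jε.1 jε.2) ?_ ?_
      · rintro ⟨j, ε⟩ hjε
        obtain ⟨hj, hε⟩ := mem_product.1 hjε
        have hε : ε = 1 ∨ ε = -1 := by simpa using hε
        refine mem_filter.2 ⟨mem_latticeBall.2 ?_, hpred j (mem_filter.1 hj).2 ε (by omega)⟩
        rw [sum_abs_update, hy'Z j hj]
        rcases hε with rfl | rfl <;> simp <;> omega
      · rintro ⟨j, ε⟩ hjε ⟨j', ε'⟩ hjε' heq
        obtain ⟨hj, hε⟩ := mem_product.1 hjε
        have hjj' : j = j' := by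
          by_contra hne
          have := congrFun heq j
          simp only [Function.update_self, Function.update_of_ne hne, hy'Z j hj] at this
          simp [this] at hε
        subst hjj'
        simpa using congrFun heq j

theorem card_latticeBall_sdiff_sphereS_mul_le (hdt : 2 * t ≤ d + 2) :
    #(latticeBall d t \ sphereS d t) * d ≤ #(latticeBall d t) * (t * (t + 1)) :=
  card_mul_le_card_mul (fun y z => y ∈ predecessors z)
    (fun _ hy => le_card_filter_mem_predecessors hdt hy)
    (fun _ hz => (card_le_card fun _ hy => (mem_filter.1 hy).2).trans
      (card_predecessors_le_of_mem_latticeBall hz))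

def ballSphereKernel (d t : ℕ) : (Fin d → ℤ) → ℝ :=
  averageDiffKernel (latticeBall d t) (sphereS d t)

theorem norm_Mop_sub_Sop_le (f : (Fin d → ℤ) → ℂ) (x : Fin d → ℤ) :
    ‖Mop d t f x - Sop d t f x‖
      ≤ ∑ y ∈ latticeBall d t, ‖ballSphereKernel d t y‖ * ‖f (x - y)‖ := by
  rw [Mop, Sop, average_sub_average_eq sphereS_subset_latticeBall]
  refine (norm_sum_le _ _).trans_eq (sum_congr rfl fun y _ => ?_)
  rw [norm_mul, Complex.norm_real, ballSphereKernel]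

theorem sum_abs_ballSphereKernel_le (hd : 0 < d) (ht : 1 ≤ t) (htd : t ^ 2 ≤ d) :
    ∑ y ∈ latticeBall d t, |ballSphereKernel d t y| ≤ 4 * t ^ 2 / d := by
  have hB : (0 : ℝ) < #(latticeBall d t) := by
    exact_mod_cast card_pos.2 ⟨0, mem_latticeBall.2 (by simp)⟩
  have hcount : (#(latticeBall d t \ sphereS d t) : ℝ) * d
      ≤ #(latticeBall d t) * (t * (t + 1)) := by
    exact_mod_cast card_latticeBall_sdiff_sphereS_mul_le (by nlinarith)
  have ht' : (1 : ℝ) ≤ t := by exact_mod_cast ht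
  have hquad : (t : ℝ) * (t + 1) ≤ 2 * t ^ 2 := by nlinarith
  refine (sum_abs_averageDiffKernel_le sphereS_subset_latticeBall).trans ?_
  rw [div_le_div_iff₀ hB (by positivity)]
  nlinarith [mul_le_mul_of_nonneg_left hquad hB.le]

/-- The exponents `n` of the dyadic scales `2 ^ n ≤ √d`. -/
def dyadicExponents (d : ℕ) : Finset ℕ := range (Nat.log 4 d + 1)

theorem mem_dyadicExponents {n : ℕ} (hd : 0 < d) : n ∈ dyadicExponents d ↔ 4 ^ n ≤ d := by
  rw [dyadicExponents, mem_range_succ_iff, Nat.le_log_iff_pow_le (by norm_num) hd.ne']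

theorem four_pow_le_of_two_pow_le_sqrt {n : ℕ} (h : ((2 ^ n : ℕ) : ℝ) ≤ √d) : 4 ^ n ≤ d := by
  rw [Real.le_sqrt (by positivity) (by positivity)] at h
  have : (2 ^ n) ^ 2 ≤ d := by exact_mod_cast h
  rwa [← pow_mul, mul_comm, pow_mul] at this

theorem iSup_enorm_Mop_sub_Sop_le (hd : 0 < d) (f : (Fin d → ℤ) → ℂ) (x : Fin d → ℤ) :
    ⨆ (n : ℕ) (_ : ((2 ^ n : ℕ) : ℝ) ≤ √d), (‖Mop d (2 ^ n) f x - Sop d (2 ^ n) f x‖₊ : ℝ≥0∞)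
      ≤ ‖∑ n ∈ dyadicExponents d, ∑ y ∈ latticeBall d (2 ^ n),
          ‖ballSphereKernel d (2 ^ n) y‖ * ‖f (x - y)‖‖ₑ := by
  refine iSup₂_le fun n hn => enorm_le_iff_norm_le.2 ?_
  rw [Real.norm_of_nonneg (by positivity)]
  refine (norm_Mop_sub_Sop_le f x).trans ?_
  exact single_le_sum (f := fun m => ∑ y ∈ latticeBall d (2 ^ m),
      ‖ballSphereKernel d (2 ^ m) y‖ * ‖f (x - y)‖)
    (fun m _ => by positivity) ((mem_dyadicExponents hd).2 (four_pow_le_of_two_pow_le_sqrt hn))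

theorem sum_dyadicExponents_four_pow_div_le (hd : 0 < d) :
    ∑ n ∈ dyadicExponents d, 4 * (4 : ℝ) ^ n / d ≤ 6 := by
  have hlog : ((4 ^ Nat.log 4 d : ℕ) : ℝ) ≤ d := by exact_mod_cast Nat.pow_log_le_self 4 hd.ne'
  have hd' : (0 : ℝ) < d := by exact_mod_cast hd
  rw [dyadicExponents, ← sum_div, ← mul_sum, geom_sum_eq (by norm_num), div_le_iff₀ hd']
  push_cast at hlog
  rw [pow_succ]
  linarith

theorem sum_dyadicExponents_sum_enorm_ballSphereKernel_le (hd : 0 < d) :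
    ∑ n ∈ dyadicExponents d, ∑ y ∈ latticeBall d (2 ^ n), ‖ballSphereKernel d (2 ^ n) y‖ₑ ≤ 6 := by
  have hterm : ∀ n ∈ dyadicExponents d,
      ∑ y ∈ latticeBall d (2 ^ n), ‖ballSphereKernel d (2 ^ n) y‖ₑ
        ≤ ENNReal.ofReal (4 * 4 ^ n / d) := fun n hn => by
    have h4n := (mem_dyadicExponents hd).1 hn
    simp_rw [Real.enorm_eq_ofReal_abs]
    rw [← ENNReal.ofReal_sum_of_nonneg fun _ _ => abs_nonneg _]
    refine ENNReal.ofReal_le_ofReal ((sum_abs_ballSphereKernel_le hd Nat.one_le_two_pow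
      (by rwa [← pow_mul, mul_comm, pow_mul])).trans_eq ?_)
    push_cast
    rw [← pow_mul, mul_comm n 2, pow_mul]
    norm_num
  calc _ ≤ ∑ n ∈ dyadicExponents d, ENNReal.ofReal (4 * 4 ^ n / d) := sum_le_sum hterm
    _ = ENNReal.ofReal (∑ n ∈ dyadicExponents d, 4 * 4 ^ n / d) :=
      (ENNReal.ofReal_sum_of_nonneg fun _ _ => by positivity).symm
    _ ≤ 6 := by
      simpa using ENNReal.ofReal_le_ofReal (sum_dyadicExponents_four_pow_div_le hd)

end LatticeBall

open LatticeBall in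
theorem dyadic_maximal_M_sub_S_l2_bound_general (d : ℕ) (hd : 4 ≤ d)
    (f : (Fin d → ℤ) → ℂ) :
    (∑' x : Fin d → ℤ,
        (⨆ (n : ℕ) (_ : ((2 ^ n : ℕ) : ℝ) ≤ Real.sqrt d),
          (‖Mop d (2 ^ n) f x - Sop d (2 ^ n) f x‖₊ : ℝ≥0∞)) ^ (2 : ℝ)) ^ ((1 : ℝ) / 2)
      ≤ 6 * (∑' x : Fin d → ℤ, (‖f x‖₊ : ℝ≥0∞) ^ (2 : ℝ)) ^ ((1 : ℝ) / 2) := by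
  have hd₀ : 0 < d := by omega
  calc _ = eLpNorm (fun x => ⨆ (n : ℕ) (_ : ((2 ^ n : ℕ) : ℝ) ≤ √d),
          (‖Mop d (2 ^ n) f x - Sop d (2 ^ n) f x‖₊ : ℝ≥0∞)) 2 Measure.count := by
        rw [eLpNorm_two_count_eq_tsum]; simp only [enorm_eq_self]
    _ ≤ eLpNorm (fun x => ∑ n ∈ dyadicExponents d, ∑ y ∈ latticeBall d (2 ^ n),
          ‖ballSphereKernel d (2 ^ n) y‖ * ‖f (x - y)‖) 2 Measure.count :=
        eLpNorm_mono_enorm fun x => by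
          simpa only [enorm_eq_self] using iSup_enorm_Mop_sub_Sop_le hd₀ f x
    _ ≤ (∑ n ∈ dyadicExponents d, ∑ y ∈ latticeBall d (2 ^ n), ‖‖ballSphereKernel d (2 ^ n) y‖‖ₑ)
          * eLpNorm (fun x => ‖f x‖) 2 Measure.count := by
        simpa only [smul_eq_mul] using eLpNorm_sum_sum_smul_comp_sub_le one_le_two
          (dyadicExponents d) (fun n => latticeBall d (2 ^ n))
          (fun n y => ‖ballSphereKernel d (2 ^ n) y‖) (fun x => ‖f x‖)
    _ ≤ 6 * eLpNorm f 2 Measure.count := by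
        simp only [enorm_norm, eLpNorm_norm]
        gcongr
        exact sum_dyadicExponents_sum_enorm_ballSphereKernel_le hd₀
    _ = _ := by rw [eLpNorm_two_count_eq_tsum]; simp only [enorm_eq_nnnorm]

/-- Lemma 2.6: for `d ≥ 4` and `f ∈ l²(ℤ^d)`,
`‖ sup_{t ∈ 𝔻, t ≤ √d} |(𝓜_t - 𝓢_t) f| ‖_{l²(ℤ^d)} ≤ 6 ‖f‖_{l²(ℤ^d)}`. -/
theorem dyadic_maximal_M_sub_S_l2_bound (d : ℕ) (hd : 4 ≤ d)
    (f : (Fin d → ℤ) → ℂ) (hf : Memℓp f 2) :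
    (∑' x : Fin d → ℤ,
        (⨆ (n : ℕ) (_ : ((2 ^ n : ℕ) : ℝ) ≤ Real.sqrt d),
          (‖Mop d (2 ^ n) f x - Sop d (2 ^ n) f x‖₊ : ℝ≥0∞)) ^ (2 : ℝ)) ^ ((1 : ℝ) / 2)
      ≤ 6 * (∑' x : Fin d → ℤ, (‖f x‖₊ : ℝ≥0∞) ^ (2 : ℝ)) ^ ((1 : ℝ) / 2) :=
  dyadic_maximal_M_sub_S_l2_bound_general d hd f
end
end

section
/- For every d, t ∈ ℕ with t ≤ d and every ξ ∈ 𝕋^d one has |s_t(ξ) − 1| ≤ 2 · (t/d) · Σ_{j=1}^d sin²(π ξ_j). -/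
/-!
Grouping the points of `S_t` by their support `A` and summing over the signs on `A` writes
`s_t(ξ)` as the average, over the `t`-subsets `A` of the coordinates, of `∏_{k ∈ A} cos (2πξ_k)`.
Since the cosines lie in `[-1, 1]`, `|1 - ∏_{k ∈ A} c_k| ≤ ∑_{k ∈ A} (1 - c_k)`, and averaging over
`A` (each coordinate lies in a fraction `t/d` of the `t`-subsets) gives
`(t/d) ∑_k (1 - cos (2πξ_k)) = 2 (t/d) ∑_k sin² (πξ_k)`.
-/

open Finset

noncomputable section

/-- `s_t(ξ) = |S_t|⁻¹ Σ_{x ∈ S_t} e(x·ξ)`, where `e(y) = e^{2πiy}`. -/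
def sMul (d t : ℕ) (ξ : Fin d → ℝ) : ℂ :=
  ((sphereS d t).card : ℂ)⁻¹ *
    ∑ x ∈ sphereS d t, Complex.exp (2 * (Real.pi : ℂ) * Complex.I * ∑ k, (x k : ℂ) * (ξ k : ℂ))

theorem sum_powersetCard_sum_mul_card {ι R : Type*} [DecidableEq ι] [CommSemiring R]
    (s : Finset ι) (n : ℕ) (f : ι → R) :
    (∑ A ∈ s.powersetCard n, ∑ k ∈ A, f k) * #s = n * (#s).choose n * ∑ k ∈ s, f k := by
  cases n with
  | zero => simp
  | succ n =>
    have hcount : ∀ k ∈ s, #{A ∈ s.powersetCard (n + 1) | k ∈ A} = (#s - 1).choose n := by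
      intro k hk
      simpa using card_filter_powersetCard_subset {k} s (n + 1) (by simpa) (by simp)
    have hchoose : (#s - 1).choose n * #s = (n + 1) * (#s).choose (n + 1) := by
      cases #s with
      | zero => simp
      | succ m => simpa [mul_comm] using Nat.add_one_mul_choose_eq m n
    have hswap : ∑ A ∈ s.powersetCard (n + 1), ∑ k ∈ A, f k =
        ∑ k ∈ s, ∑ A ∈ s.powersetCard (n + 1) with k ∈ A, f k :=
      sum_comm' fun A k => by
        simp only [mem_filter, mem_powersetCard]
        exact ⟨fun ⟨⟨hA, hc⟩, hk⟩ => ⟨⟨⟨hA, hc⟩, hk⟩, hA hk⟩,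
          fun ⟨⟨⟨hA, hc⟩, hk⟩, _⟩ => ⟨⟨hA, hc⟩, hk⟩⟩
    rw [hswap, sum_mul, mul_sum]
    refine sum_congr rfl fun k hk => ?_
    rw [sum_const, hcount k hk, nsmul_eq_mul, mul_right_comm, ← Nat.cast_mul, hchoose]
    push_cast
    ring

theorem sum_powersetCard_sum_eq_mul_sum {ι K : Type*} [DecidableEq ι] [Field K] [CharZero K]
    (s : Finset ι) (n : ℕ) (f : ι → K) :
    ∑ A ∈ s.powersetCard n, ∑ k ∈ A, f k = (#s).choose n * (n / #s) * ∑ k ∈ s, f k := by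
  rcases s.eq_empty_or_nonempty with rfl | hs
  · cases n with
    | zero => simp
    | succ n => rw [powersetCard_eq_empty.2 (by simp)]; simp
  · have hcard : (#s : K) ≠ 0 := by exact_mod_cast hs.card_pos.ne'
    rw [← mul_div_cancel_right₀ (∑ A ∈ s.powersetCard n, ∑ k ∈ A, f k) hcard,
      sum_powersetCard_sum_mul_card]
    ring

theorem abs_one_sub_prod_le_sum {ι R : Type*}
    [CommRing R] [LinearOrder R] [IsStrictOrderedRing R]
    (s : Finset ι) (c : ι → R) (hc : ∀ k ∈ s, |c k| ≤ 1) :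
    |1 - ∏ k ∈ s, c k| ≤ ∑ k ∈ s, (1 - c k) := by
  induction s using Finset.cons_induction with
  | empty => simp
  | cons a s _ ih =>
    rw [prod_cons, sum_cons]
    have ha1 : |c a| ≤ 1 := hc a (mem_cons_self a s)
    have ih := ih fun k hk => hc k (mem_cons_of_mem hk)
    calc |1 - c a * ∏ k ∈ s, c k| = |(1 - c a) + c a * (1 - ∏ k ∈ s, c k)| := by ring_nf
      _ ≤ |1 - c a| + |c a| * |1 - ∏ k ∈ s, c k| := by rw [← abs_mul]; exact abs_add_le _ _
      _ ≤ (1 - c a) + 1 * |1 - ∏ k ∈ s, c k| := by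
          gcongr
          exact (abs_of_nonneg (sub_nonneg.2 (abs_le.1 ha1).2)).le
      _ ≤ (1 - c a) + ∑ k ∈ s, (1 - c k) := by linarith

theorem mem_sphereS {d t : ℕ} {x : Fin d → ℤ} :
    x ∈ sphereS d t ↔ (∀ k, |x k| ≤ 1) ∧ ∑ k, |x k| = t := by
  simp [sphereS, Pi.le_def, abs_le, forall_and]

theorem sum_abs_eq_card_support {ι : Type*} [Fintype ι] {x : ι → ℤ} (hx : ∀ k, |x k| ≤ 1) :
    ∑ k, |x k| = #{k | x k ≠ 0} := by
  rw [card_filter, Nat.cast_sum]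
  refine sum_congr rfl fun k _ => ?_
  obtain ⟨hlo, hhi⟩ := abs_le.1 (hx k)
  interval_cases x k <;> simp

theorem mem_ite_signs_iff (z : ℤ) (p : Prop) [Decidable p] :
    z ∈ (if p then ({-1, 1} : Finset ℤ) else {0}) ↔ |z| ≤ 1 ∧ (z ≠ 0 ↔ p) := by
  split_ifs with hp <;> simp [hp, abs_le] <;> omega

theorem filter_sphereS_support_eq_piFinset {d t : ℕ} {A : Finset (Fin d)} (hA : #A = t) :
    {x ∈ sphereS d t | ({k | x k ≠ 0} : Finset (Fin d)) = A} =
      Fintype.piFinset fun k => if k ∈ A then {-1, 1} else {0} := by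
  ext x
  simp only [mem_filter, mem_sphereS, Fintype.mem_piFinset, mem_ite_signs_iff, forall_and]
  constructor
  · rintro ⟨⟨hx, -⟩, rfl⟩
    exact ⟨hx, fun k => by simp⟩
  · rintro ⟨hx, hsupp⟩
    have hsupp : ({k | x k ≠ 0} : Finset (Fin d)) = A := by ext k; simp [hsupp k]
    exact ⟨⟨hx, by rw [sum_abs_eq_card_support hx, hsupp, hA]⟩, hsupp⟩

theorem sum_sphereS_prod_eq_sum_powersetCard {R : Type*} [CommSemiring R] (d t : ℕ)
    (g : Fin d → ℤ → R) (hg : ∀ k, g k 0 = 1) :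
    ∑ x ∈ sphereS d t, ∏ k, g k (x k) =
      ∑ A ∈ powersetCard t univ, ∏ k ∈ A, (g k (-1) + g k 1) := by
  have hmaps : ∀ x ∈ sphereS d t, ({k | x k ≠ 0} : Finset (Fin d)) ∈ powersetCard t univ := by
    intro x hx
    obtain ⟨hx, hsum⟩ := mem_sphereS.1 hx
    rw [sum_abs_eq_card_support hx] at hsum
    exact mem_powersetCard.2 ⟨subset_univ _, by exact_mod_cast hsum⟩
  rw [← sum_fiberwise_of_maps_to hmaps]
  refine sum_congr rfl fun A hA => ?_
  rw [filter_sphereS_support_eq_piFinset (mem_powersetCard.1 hA).2, ← prod_univ_sum]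
  have hfactor : ∀ k, ∑ v ∈ (if k ∈ A then {-1, 1} else {0}), g k v =
      if k ∈ A then g k (-1) + g k 1 else 1 := by
    intro k
    split_ifs <;> simp [hg]
  rw [prod_congr rfl fun k _ => hfactor k, prod_ite_mem, univ_inter]

theorem card_sphereS (d t : ℕ) : #(sphereS d t) = d.choose t * 2 ^ t := by
  have h := sum_sphereS_prod_eq_sum_powersetCard (R := ℕ) d t (fun _ _ => 1) fun _ => rfl
  simp only [prod_const_one, ← card_eq_sum_ones] at h
  rw [h, sum_congr rfl fun A hA => by rw [prod_const, (mem_powersetCard.1 hA).2],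
    sum_const, card_powersetCard, card_univ, Fintype.card_fin, smul_eq_mul]

theorem sMul_eq_average_prod_cos (d t : ℕ) (ξ : Fin d → ℝ) :
    sMul d t ξ = (((d.choose t : ℝ)⁻¹ *
      ∑ A ∈ powersetCard t univ, ∏ k ∈ A, Real.cos (2 * Real.pi * ξ k) : ℝ) : ℂ) := by
  set θ : Fin d → ℂ := fun k => ((2 * Real.pi * ξ k : ℝ) : ℂ)
  have hexp : ∀ x : Fin d → ℤ,
      Complex.exp (2 * Real.pi * Complex.I * ∑ k, (x k : ℂ) * ξ k) =
        ∏ k, Complex.exp (x k * θ k * Complex.I) := by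
    intro x
    rw [← Complex.exp_sum, mul_sum]
    congr 1
    refine sum_congr rfl fun k _ => ?_
    simp only [θ]
    push_cast
    ring
  have hcos : ∀ k, Complex.exp (((-1 : ℤ) : ℂ) * θ k * Complex.I) +
      Complex.exp (((1 : ℤ) : ℂ) * θ k * Complex.I) = 2 * Complex.cos (θ k) := by
    intro k
    rw [Complex.two_cos]
    push_cast
    ring_nf
  have hpow : ∀ A ∈ powersetCard t (univ : Finset (Fin d)),
      ∏ k ∈ A, 2 * Complex.cos (θ k) = 2 ^ t * ∏ k ∈ A, Complex.cos (θ k) := by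
    intro A hA
    rw [prod_mul_distrib, prod_const, (mem_powersetCard.1 hA).2]
  rw [sMul, sum_congr rfl fun x _ => hexp x,
    sum_sphereS_prod_eq_sum_powersetCard d t (fun k v => Complex.exp (v * θ k * Complex.I))
      fun k => by simp,
    sum_congr rfl fun A _ => prod_congr rfl fun k _ => hcos k, sum_congr rfl hpow, ← mul_sum,
    card_sphereS]
  push_cast [Complex.ofReal_cos, θ]
  rw [mul_inv, mul_assoc, inv_mul_cancel_left₀ (pow_ne_zero t two_ne_zero)]

theorem sMul_sub_one_bound_general (d t : ℕ) (ht : t ≤ d) (ξ : Fin d → ℝ) :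
    ‖sMul d t ξ - 1‖ ≤
      2 * ((t : ℝ) / d) * ∑ j, Real.sin (Real.pi * ξ j) ^ 2 := by
  have hC : (0 : ℝ) < d.choose t := by exact_mod_cast Nat.choose_pos ht
  have hsub : sMul d t ξ - 1 = ((-(d.choose t : ℝ)⁻¹ *
      ∑ A ∈ powersetCard t univ, (1 - ∏ k ∈ A, Real.cos (2 * Real.pi * ξ k)) : ℝ) : ℂ) := by
    rw [sMul_eq_average_prod_cos, sum_sub_distrib, sum_const, card_powersetCard, card_univ,
      Fintype.card_fin, nsmul_one, mul_sub, neg_mul, inv_mul_cancel₀ hC.ne']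
    push_cast
    ring
  have hsin : ∀ k, 1 - Real.cos (2 * Real.pi * ξ k) = 2 * Real.sin (Real.pi * ξ k) ^ 2 := by
    intro k
    rw [mul_assoc, Real.cos_two_mul_eq_one_sub, sub_sub_cancel]
  calc ‖sMul d t ξ - 1‖ = (d.choose t : ℝ)⁻¹ *
        |∑ A ∈ powersetCard t univ, (1 - ∏ k ∈ A, Real.cos (2 * Real.pi * ξ k))| := by
        rw [hsub, Complex.norm_real, Real.norm_eq_abs, abs_mul, abs_neg, abs_inv, abs_of_pos hC]
    _ ≤ (d.choose t : ℝ)⁻¹ *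
        ∑ A ∈ powersetCard t univ, ∑ k ∈ A, (1 - Real.cos (2 * Real.pi * ξ k)) := by
        gcongr
        exact (abs_sum_le_sum_abs _ _).trans <| sum_le_sum fun A _ =>
          abs_one_sub_prod_le_sum A _ fun k _ => Real.abs_cos_le_one _
    _ = 2 * ((t : ℝ) / d) * ∑ j, Real.sin (Real.pi * ξ j) ^ 2 := by
        rw [sum_powersetCard_sum_eq_mul_sum, card_univ, Fintype.card_fin, mul_assoc,
          inv_mul_cancel_left₀ hC.ne', sum_congr rfl fun k _ => hsin k, ← mul_sum]
        ring

/-- Lemma 3.1: for `t ≤ d` and every `ξ ∈ 𝕋^d`,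
`|s_t(ξ) - 1| ≤ 2 (t/d) Σ_j sin²(π ξ_j)`. -/
theorem sMul_sub_one_bound (d t : ℕ) (ht0 : 1 ≤ t) (ht : t ≤ d) (ξ : Fin d → ℝ) :
    ‖sMul d t ξ - 1‖ ≤
      2 * ((t : ℝ) / d) * ∑ j, Real.sin (Real.pi * ξ j) ^ 2 :=
  sMul_sub_one_bound_general d t ht ξ
end
end
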